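/- For any admissible configuration X and any word α = (α_1,…,α_n) of positive integers, ε_X(α) = d_X(α) − d_X(πα) − d_X(ϖα) + d_X(πϖα), where πα (resp. ϖα) removes the last (resp. first) letter of α. -/

import Mathlib

open scoped Classical

/-- A configuration of the infinite-bin model: number of balls in each bin. -/
abbrev Config := ℤ → ℕ∞

/-- Admissible configuration: nonempty bins form a semi-infinite interval, and
every bin to the left of an infinite bin is infinite. -/
def IsAdmissible (X : Config) : Prop :=
  (∃ m : ℤ, ∀ j : ℤ, X j ≠ 0 ↔ j ≤ m) ∧ ∀ j : ℤ, X j = ⊤ → X (j - 1) = ⊤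

/-- N(X,k): number of balls in bins of index ≥ k. -/
noncomputable def Nballs (X : Config) (k : ℤ) : ℕ∞ := ∑' j : {j : ℤ // k ≤ j}, X j

/-- B(X,ξ): leftmost position such that there are fewer than ξ balls to its right. -/
noncomputable def Bpos (X : Config) (ξ : ℕ) : ℤ := sInf {j : ℤ | Nballs X j < (ξ : ℕ∞)}

/-- The move of type ξ: add one ball in the bin of index B(X,ξ). -/
noncomputable def Phi (ξ : ℕ) (X : Config) : Config :=
  fun j => X j + (if j = Bpos X ξ then 1 else 0)

/-- The move of type ξ ∈ ℕ ∪ {∞}, with Φ_∞ = id. -/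
noncomputable def PhiE (ξ : ℕ∞) (X : Config) : Config :=
  if ξ = ⊤ then X else Phi ξ.toNat X

/-- The shift operator τ. -/
def shift (X : Config) : Config := fun j => X (j - 1)

/-- Configuration obtained after applying successively the moves listed in α. -/
noncomputable def applyWord (X : Config) (α : List ℕ) : Config :=
  α.foldl (fun Y a => Phi a Y) X

/-- d_X(α): displacement of the front after performing the word α. -/
noncomputable def dX (X : Config) (α : List ℕ) : ℤ :=
  Bpos (applyWord X α) 1 - Bpos X 1

/-- α ∈ P_X : α is nonempty and its last move places a ball in a previously empty bin. -/
def inP (X : Config) (α : List ℕ) : Prop :=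
  ∃ β a, α = β ++ [a] ∧ applyWord X β (Bpos (applyWord X β) a) = 0

/-- ε_X(α) = 1_{α ∈ P_X} - 1_{ϖα ∈ P_X}. -/
noncomputable def eps (X : Config) (α : List ℕ) : ℤ :=
  (if inP X α then 1 else 0) - (if inP X α.tail then 1 else 0)

/-!
If the nonempty bins of `Y` are exactly those of index `≤ m`, then `B(Y,1) = m + 1` and
`B(Y,ξ) ≤ m + 1` for `ξ ≥ 1`. So a move either puts its ball in the empty bin `m + 1`, advancing the
front by one, or in a nonempty bin, leaving the front in place, and in both cases the support stays
of this shape. Hence `d_X(α) - d_X(πα) = 1_{α ∈ P_X}`, and subtracting this identity for `ϖα`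
from the one for `α` gives the theorem.
-/

open Function Set

protected theorem ENat.summable {ι : Type*} (f : ι → ℕ∞) : Summable f :=
  ⟨_, tendsto_atTop_iSup fun _ _ => Finset.sum_le_sum_of_subset⟩

theorem nballs_eq_zero_iff {Y : Config} {k : ℤ} : Nballs Y k = 0 ↔ ∀ j, k ≤ j → Y j = 0 := by
  rw [Nballs, (ENat.summable _).tsum_eq_zero_iff, Subtype.forall]

theorem le_nballs {Y : Config} {k : ℤ} {n : ℕ} (h : Ico k (k + n) ⊆ support Y) :
    (n : ℕ∞) ≤ Nballs Y k := by
  let e : Fin n → {j : ℤ // k ≤ j} := fun i => ⟨k + i, by omega⟩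
  have he : Injective e := fun i i' hii' => by
    simpa [e, Fin.val_inj] using congrArg Subtype.val hii'
  have hone (i : Fin n) : 1 ≤ Y (e i) :=
    Order.one_le_iff_ne_zero.mpr (h ⟨by simp [e], by simp [e, i.isLt]⟩)
  calc (n : ℕ∞) = ∑' _ : Fin n, 1 := by simp
    _ ≤ Nballs Y k := (ENat.summable _).tsum_le_tsum_of_inj e he (fun _ _ => zero_le) hone
        (ENat.summable _)

theorem support_phi (a : ℕ) (Y : Config) : support (Phi a Y) = insert (Bpos Y a) (support Y) := by
  ext j
  by_cases hj : j = Bpos Y a <;> simp [Phi, hj]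

section SupportIic

variable {Y : Config} {m : ℤ}

theorem eq_zero_iff_of_support_eq_Iic (hY : support Y = Iic m) (j : ℤ) : Y j = 0 ↔ m < j := by
  rw [← notMem_support, hY, mem_Iic, not_le]

theorem bpos_one_of_support_eq_Iic (hY : support Y = Iic m) : Bpos Y 1 = m + 1 := by
  have hset : {j : ℤ | Nballs Y j < ((1 : ℕ) : ℕ∞)} = Ici (m + 1) := by
    ext j
    simp only [mem_ofPred_eq, Nat.cast_one, Order.lt_one_iff, nballs_eq_zero_iff,
      eq_zero_iff_of_support_eq_Iic hY, mem_Ici]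
    exact ⟨fun h => h j le_rfl, fun h i hi => by omega⟩
  rw [Bpos, hset, csInf_Ici]

theorem bpos_le_of_support_eq_Iic (hY : support Y = Iic m) {a : ℕ} (ha : 1 ≤ a) :
    Bpos Y a ≤ m + 1 := by
  refine csInf_le ⟨m + 2 - a, fun j hj => ?_⟩ ?_
  · by_contra hlt
    exact (hj.trans_le (le_nballs (hY ▸ fun i hi => show i ≤ m by rw [mem_Ico] at hi; omega))).false
  · show Nballs Y (m + 1) < a
    rw [nballs_eq_zero_iff.mpr fun j hj => (eq_zero_iff_of_support_eq_Iic hY j).mpr (by omega)]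
    exact_mod_cast ha

theorem support_phi_of_support_eq_Iic (hY : support Y = Iic m) {a : ℕ} (ha : 1 ≤ a) :
    support (Phi a Y) = Iic (m + if Y (Bpos Y a) = 0 then 1 else 0) := by
  rw [support_phi, hY]
  split_ifs with hb
  · have hbm : Bpos Y a = m + 1 :=
      le_antisymm (bpos_le_of_support_eq_Iic hY ha) ((eq_zero_iff_of_support_eq_Iic hY _).mp hb)
    rw [hbm, ← Order.succ_eq_add_one, Order.Iic_succ]
  · rw [add_zero, insert_eq_of_mem (hY ▸ hb)]

theorem bpos_one_phi_of_support_eq_Iic (hY : support Y = Iic m) {a : ℕ} (ha : 1 ≤ a) :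
    Bpos (Phi a Y) 1 = Bpos Y 1 + if Y (Bpos Y a) = 0 then 1 else 0 := by
  rw [bpos_one_of_support_eq_Iic (support_phi_of_support_eq_Iic hY ha),
    bpos_one_of_support_eq_Iic hY, add_right_comm]

end SupportIic

theorem applyWord_append_singleton (X : Config) (β : List ℕ) (a : ℕ) :
    applyWord X (β ++ [a]) = Phi a (applyWord X β) := by
  simp [applyWord, List.foldl_append]

theorem inP_append_singleton {X : Config} {β : List ℕ} {a : ℕ} :
    inP X (β ++ [a]) ↔ applyWord X β (Bpos (applyWord X β) a) = 0 := by
  refine ⟨fun ⟨β', a', heq, h⟩ => ?_, fun h => ⟨β, a, rfl, h⟩⟩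
  obtain ⟨rfl, ha⟩ := List.append_inj' heq.symm rfl
  obtain rfl := List.singleton_inj.mp ha
  exact h

theorem not_inP_nil (X : Config) : ¬ inP X [] := by
  rintro ⟨β, a, heq, -⟩
  simp at heq

section Words

variable {X : Config} {m : ℤ}

theorem exists_support_applyWord_eq_Iic (hX : support X = Iic m) {β : List ℕ}
    (hβ : ∀ a ∈ β, 1 ≤ a) : ∃ m', support (applyWord X β) = Iic m' := by
  induction β using List.reverseRecOn with
  | nil => exact ⟨m, hX⟩
  | append_singleton γ a ih =>
    obtain ⟨m', hm'⟩ := ih fun b hb => hβ b (by simp [hb])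
    rw [applyWord_append_singleton]
    exact ⟨_, support_phi_of_support_eq_Iic hm' (hβ a (by simp))⟩

theorem dX_sub_dX_dropLast (hX : support X = Iic m) {α : List ℕ} (hα : ∀ a ∈ α, 1 ≤ a) :
    dX X α - dX X α.dropLast = if inP X α then 1 else 0 := by
  rcases List.eq_nil_or_concat' α with rfl | ⟨β, a, rfl⟩
  · simp [not_inP_nil]
  obtain ⟨m', hm'⟩ := exists_support_applyWord_eq_Iic hX (β := β) fun b hb => hα b (by simp [hb])
  rw [List.dropLast_concat, dX, dX, applyWord_append_singleton,
    bpos_one_phi_of_support_eq_Iic hm' (hα a (by simp)), inP_append_singleton]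
  split_ifs <;> ring

end Words

/-- ε_X(α) = d_X(α) − d_X(πα) − d_X(ϖα) + d_X(πϖα). -/
theorem eps_eq_dX (X : Config) (hX : IsAdmissible X) (α : List ℕ)
    (hα : ∀ a ∈ α, 1 ≤ a) :
    eps X α = dX X α - dX X α.dropLast - dX X α.tail + dX X α.tail.dropLast := by
  obtain ⟨m, hm⟩ := hX.1
  have hsupp : support X = Iic m := Set.ext hm
  have hstep := dX_sub_dX_dropLast hsupp hα
  have htail := dX_sub_dX_dropLast hsupp fun a ha => hα a (List.mem_of_mem_tail ha)
  rw [eps]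
  omega
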